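/- Let R be an associative ring of characteristic p > 0 with R^[3] nilpotent and R^[2]/R^[3] central considerations as follows: then R^[2] is a nil ideal. Specifically, for every x ∈ R^[2] there exists s with x^{p^s} = 0. -/

import Mathlib

/-- Additive subgroup generated by products `s * t` with `s ∈ S`, `t ∈ T`. -/
def aprod {R : Type*} [NonUnitalRing R] (S T : AddSubgroup R) : AddSubgroup R :=
  AddSubgroup.closure {x : R | ∃ s ∈ S, ∃ t ∈ T, x = s * t}

/-- Additive subgroup generated by Lie commutators `s*t - t*s`. -/
def lbrk {R : Type*} [NonUnitalRing R] (S T : AddSubgroup R) : AddSubgroup R :=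
  AddSubgroup.closure {x : R | ∃ s ∈ S, ∃ t ∈ T, x = s * t - t * s}

/-- The lower Lie central series `γ₁(R) = R`, `γₙ(R) = [γₙ₋₁(R), R]`. -/
def lieGamma (R : Type*) [NonUnitalRing R] : ℕ → AddSubgroup R
  | 0 => ⊤
  | 1 => ⊤
  | n + 2 => lbrk (lieGamma R (n + 1)) ⊤

/-- The `n`-th lower Lie power `R^[n] = γₙ(R)·R`. -/
def lowerLiePow (R : Type*) [NonUnitalRing R] (n : ℕ) : AddSubgroup R :=
  aprod (lieGamma R n) ⊤

/-!
Modulo `R^[n+3]`, every element of `R^[n+2]` is a sum of products `c * r` with `c = g x - x g`,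
`g ∈ γₙ₊₁`. Such a `c` is central modulo `R^[n+3]` (its commutators lie in `γₙ₊₃`), and it squares
to zero there by the identity `c² = [g c, x] - g [c, x]`, in which `g c = [g, g x] ∈ γₙ₊₂`.
A sum of multiples of central square-zero elements is nilpotent, so each element of `R^[n+2]` has
a power in `R^[n+3]`. Climbing the series until `R^[t] = 0` makes every `x ∈ R^[2]` nilpotent.
-/

section CentralSquareZero

variable {S : Type*}

lemma exists_add_mul_pow_eq [Semiring S] {c : S} (hc : c ∈ Set.center S) (z w : S) :
    ∀ n : ℕ, ∃ s, (z + c * w) ^ n = z ^ n + c * s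
  | 0 => ⟨0, by simp⟩
  | n + 1 => by
      obtain ⟨s, hs⟩ := exists_add_mul_pow_eq hc z w n
      have hcomm := Semigroup.mem_center_iff.mp hc
      have hzc : z ^ n * (c * w) = c * (z ^ n * w) := by rw [← mul_assoc, hcomm, mul_assoc]
      refine ⟨z ^ n * w + s * z + s * (c * w), ?_⟩
      rw [pow_succ, hs, pow_succ]
      simp only [mul_add, add_mul, mul_assoc, hzc]
      abel

lemma IsNilpotent.add_mul_of_mem_center [Semiring S] {z c : S} (hz : IsNilpotent z)
    (hc : c ∈ Set.center S) (hc2 : c * c = 0) (w : S) : IsNilpotent (z + c * w) := by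
  obtain ⟨m, hm⟩ := hz
  obtain ⟨s, hs⟩ := exists_add_mul_pow_eq hc z w m
  refine ⟨2 * m, ?_⟩
  rw [pow_mul', sq, hs, hm, zero_add, mul_assoc, ← mul_assoc s, Semigroup.mem_center_iff.mp hc s,
    mul_assoc c s s, ← mul_assoc, hc2, zero_mul]

lemma isNilpotent_of_mem_closure_center_mul [Ring S] {a : S}
    (ha : a ∈ AddSubgroup.closure {a | ∃ c ∈ Set.center S, c * c = 0 ∧ ∃ w, a = c * w}) :
    IsNilpotent a := by
  -- Nilpotency is not additive, but "adding `a` preserves nilpotency" is.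
  suffices ∀ z, IsNilpotent z → IsNilpotent (z + a) by simpa using this 0 IsNilpotent.zero
  induction ha using AddSubgroup.closure_induction'' with
  | mem _ hx =>
      obtain ⟨c, hc, hc2, w, rfl⟩ := hx
      exact fun z hz ↦ hz.add_mul_of_mem_center hc hc2 w
  | neg_mem _ hx =>
      obtain ⟨c, hc, hc2, w, rfl⟩ := hx
      exact fun z hz ↦ by simpa [← mul_neg] using hz.add_mul_of_mem_center hc hc2 (-w)
  | zero => simp
  | add a b _ _ ha hb => exact fun z hz ↦ by simpa [add_assoc] using hb _ (ha z hz)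

end CentralSquareZero

lemma aprod_lbrk_le {R : Type*} [NonUnitalRing R] {A H : AddSubgroup R}
    (h : ∀ g ∈ A, ∀ x r, (g * x - x * g) * r ∈ H) : aprod (lbrk A ⊤) ⊤ ≤ H := by
  refine (AddSubgroup.closure_le H).mpr ?_
  rintro _ ⟨s, hs, r, -, rfl⟩
  induction hs using AddSubgroup.closure_induction with
  | mem _ hx =>
      obtain ⟨g, hg, x, -, rfl⟩ := hx
      exact h g hg x r
  | zero => simp
  | add a b _ _ ha hb => simpa [add_mul] using add_mem ha hb
  | neg a _ ha => simpa [neg_mul] using neg_mem ha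

section LowerLiePow

variable {R : Type*} [Ring R]

lemma commutator_mem_lieGamma_succ_succ {n : ℕ} {g : R} (hg : g ∈ lieGamma R (n + 1)) (x : R) :
    g * x - x * g ∈ lieGamma R (n + 2) :=
  AddSubgroup.subset_closure ⟨g, hg, x, trivial, rfl⟩

lemma lieGamma_succ_le : ∀ n, lieGamma R (n + 1) ≤ lieGamma R n
  | 0 | 1 => le_top
  | n + 2 => AddSubgroup.closure_mono <| by
      rintro _ ⟨g, hg, x, -, rfl⟩
      exact ⟨g, lieGamma_succ_le (n + 1) hg, x, trivial, rfl⟩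

lemma commutator_mem_lieGamma {n : ℕ} {g : R} (hg : g ∈ lieGamma R n) (x : R) :
    g * x - x * g ∈ lieGamma R n :=
  match n with
  | 0 | 1 => trivial
  | _ + 2 => lieGamma_succ_le _ (commutator_mem_lieGamma_succ_succ hg x)

lemma lowerLiePow_antitone : Antitone (lowerLiePow R) :=
  antitone_nat_of_succ_le fun n ↦ AddSubgroup.closure_mono <| by
    rintro _ ⟨g, hg, r, -, rfl⟩
    exact ⟨g, lieGamma_succ_le n hg, r, trivial, rfl⟩

lemma lieGamma_le_lowerLiePow (n : ℕ) : lieGamma R n ≤ lowerLiePow R n :=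
  fun g hg ↦ AddSubgroup.subset_closure ⟨g, hg, 1, trivial, (mul_one g).symm⟩

lemma mul_mem_lowerLiePow_right {n : ℕ} {z : R} (hz : z ∈ lowerLiePow R n) (r : R) :
    z * r ∈ lowerLiePow R n := by
  induction hz using AddSubgroup.closure_induction with
  | mem _ hx =>
      obtain ⟨g, hg, s, -, rfl⟩ := hx
      exact AddSubgroup.subset_closure ⟨g, hg, s * r, trivial, mul_assoc g s r⟩
  | zero => simp
  | add a b _ _ ha hb => simpa [add_mul] using add_mem ha hb
  | neg a _ ha => simpa [neg_mul] using neg_mem ha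

lemma mul_mem_lowerLiePow_left {n : ℕ} {z : R} (hz : z ∈ lowerLiePow R n) (r : R) :
    r * z ∈ lowerLiePow R n := by
  induction hz using AddSubgroup.closure_induction with
  | mem _ hx =>
      obtain ⟨g, hg, s, -, rfl⟩ := hx
      rw [show r * (g * s) = g * (r * s) - (g * r - r * g) * s by noncomm_ring]
      exact sub_mem (AddSubgroup.subset_closure ⟨g, hg, r * s, trivial, rfl⟩)
        (AddSubgroup.subset_closure ⟨_, commutator_mem_lieGamma hg r, s, trivial, rfl⟩)
  | zero => simp
  | add a b _ _ ha hb => simpa [mul_add] using add_mem ha hb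
  | neg a _ ha => simpa [mul_neg] using neg_mem ha

variable (R) in
def lowerLieIdeal (n : ℕ) : TwoSidedIdeal R :=
  .mk' (lowerLiePow R n) (zero_mem _) add_mem neg_mem
    (fun hy ↦ mul_mem_lowerLiePow_left hy _) (fun hx ↦ mul_mem_lowerLiePow_right hx _)

@[simp]
lemma mem_lowerLieIdeal {n : ℕ} {z : R} : z ∈ lowerLieIdeal R n ↔ z ∈ lowerLiePow R n :=
  TwoSidedIdeal.mem_mk' ..

lemma exists_pow_mem_lowerLiePow_succ {n : ℕ} {y : R} (hy : y ∈ lowerLiePow R (n + 2)) :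
    ∃ N, y ^ N ∈ lowerLiePow R (n + 3) := by
  let I := lowerLieIdeal R (n + 3)
  let π := I.ringCon.mk'
  have hπ (z : R) : π z = 0 ↔ z ∈ lowerLiePow R (n + 3) := by
    rw [← TwoSidedIdeal.mem_ker, TwoSidedIdeal.ker_ringCon_mk', mem_lowerLieIdeal]
  have hγ (z : R) (hz : z ∈ lieGamma R (n + 3)) : π z = 0 :=
    (hπ z).mpr (lieGamma_le_lowerLiePow _ hz)
  have hcentral {u : R} (hu : u ∈ lieGamma R (n + 2)) : π u ∈ Set.center I.ringCon.Quotient := by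
    refine Semigroup.mem_center_iff.mpr fun q ↦ ?_
    obtain ⟨r, rfl⟩ := I.ringCon.mk'_surjective q
    rw [← map_mul, ← map_mul, eq_comm, ← sub_eq_zero, ← map_sub]
    exact hγ _ (commutator_mem_lieGamma_succ_succ hu r)
  have hsq {g : R} (hg : g ∈ lieGamma R (n + 1)) (x : R) :
      π (g * x - x * g) * π (g * x - x * g) = 0 := by
    set u := g * x - x * g
    have hu : u ∈ lieGamma R (n + 2) := commutator_mem_lieGamma_succ_succ hg x
    have hgu : g * u ∈ lieGamma R (n + 2) := by
      simpa [u, mul_sub, mul_assoc] using commutator_mem_lieGamma_succ_succ hg (g * x)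
    have hident : u * u = (g * u * x - x * (g * u)) - g * (u * x - x * u) := by
      simp only [u]; noncomm_ring
    rw [← map_mul, hident, map_sub, map_mul π g, hγ _ (commutator_mem_lieGamma_succ_succ hgu x),
      hγ _ (commutator_mem_lieGamma_succ_succ hu x), mul_zero, sub_zero]
  have hmem : π y ∈ AddSubgroup.closure
      {a | ∃ c ∈ Set.center I.ringCon.Quotient, c * c = 0 ∧ ∃ w, a = c * w} := by
    refine aprod_lbrk_le (H := (AddSubgroup.closure _).comap π.toAddMonoidHom) ?_ hy
    intro g hg x r
    exact AddSubgroup.subset_closure ⟨π (g * x - x * g),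
      hcentral (commutator_mem_lieGamma_succ_succ hg x), hsq hg x, π r, map_mul π _ _⟩
  obtain ⟨N, hN⟩ := isNilpotent_of_mem_closure_center_mul hmem
  exact ⟨N, (hπ _).mp (by rw [map_pow, hN])⟩

lemma exists_pow_mem_lowerLiePow {x : R} (hx : x ∈ lowerLiePow R 2) :
    ∀ n, ∃ N, x ^ N ∈ lowerLiePow R (n + 2)
  | 0 => ⟨1, by simpa using hx⟩
  | n + 1 => by
      obtain ⟨N, hN⟩ := exists_pow_mem_lowerLiePow hx n
      obtain ⟨M, hM⟩ := exists_pow_mem_lowerLiePow_succ hN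
      exact ⟨N * M, by rwa [pow_mul]⟩

end LowerLiePow

theorem stmt_17_general {R : Type*} [Ring R] (p : ℕ) [Fact p.Prime]
    (t : ℕ) (ht : lowerLiePow R t = ⊥) :
    ∀ x ∈ lowerLiePow R 2, ∃ s : ℕ, x ^ p ^ s = 0 := by
  intro x hx
  obtain ⟨N, hN⟩ := exists_pow_mem_lowerLiePow hx t
  have hxN : x ^ N = 0 := by
    simpa [ht] using lowerLiePow_antitone (by omega : t ≤ t + 2) hN
  exact ⟨N, pow_eq_zero_of_le (Nat.lt_pow_self (Fact.out : p.Prime).one_lt).le hxN⟩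

/-- If `R` is a lower Lie nilpotent ring of prime characteristic `p`
(say `R^[t] = 0`), then `R^[2]` is a nil ideal: every `x ∈ R^[2]` satisfies
`x^{pˢ} = 0` for some `s`. -/
theorem stmt_17 {R : Type*} [Ring R] (p : ℕ) [Fact p.Prime] [CharP R p]
    (t : ℕ) (ht : lowerLiePow R t = ⊥) :
    ∀ x ∈ lowerLiePow R 2, ∃ s : ℕ, x ^ p ^ s = 0 :=
  stmt_17_general p t ht
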